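/- Let X ∈ ℝ^{n×d}, w ∈ ℝⁿ with wᵢ > 0, and suppose X weighted by w is μ-complex. Let W = Σⱼ wⱼ. If β ∈ ℝ^d satisfies xᵢβ ≤ 1/2 for the i-th row xᵢ of X, then wᵢ g(xᵢβ) ≤ ((20 + μ) wᵢ / W) · Σⱼ wⱼ g(xⱼβ), where g(z) = ln(1+exp(z)). -/
import Mathlib

private lemma gfun_nonneg (z : ℝ) : 0 ≤ Real.log (1 + Real.exp z) := by
  apply Real.log_nonneg
  nlinarith [Real.exp_pos z]

private lemma gfun_ge (z : ℝ) : z ≤ Real.log (1 + Real.exp z) := by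
  calc z = Real.log (Real.exp z) := (Real.log_exp z).symm
  _ ≤ _ := by
    apply Real.log_le_log (Real.exp_pos z)
    linarith

private lemma gfun_key (z : ℝ) : 1 ≤ 4 * Real.log (1 + Real.exp z) + max (-z) 0 := by
  by_cases hz : -1 ≤ z
  · have h1 : (3:ℝ)/4 ≤ Real.exp (-(1/4:ℝ)) := by
      have := Real.add_one_le_exp (-(1/4:ℝ)); linarith
    have h2 : Real.exp (1/4 : ℝ) ≤ 4/3 := by
      have hmul : Real.exp (1/4:ℝ) * Real.exp (-(1/4:ℝ)) = 1 := by
        rw [← Real.exp_add]; norm_num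
      nlinarith [Real.exp_pos (1/4:ℝ), Real.exp_pos (-(1/4:ℝ))]
    have h3 : Real.exp 1 < 2.7182818286 := Real.exp_one_lt_d9
    have h4 : (1:ℝ)/3 ≤ Real.exp (-1:ℝ) := by
      rw [Real.exp_neg]
      rw [div_le_iff₀ (by norm_num : (0:ℝ) < 3)]
      rw [inv_mul_eq_div, le_div_iff₀ (Real.exp_pos 1)]
      nlinarith
    have h5 : Real.exp (-1:ℝ) ≤ Real.exp z := Real.exp_le_exp.mpr hz
    have h6 : (1:ℝ)/4 ≤ Real.log (1 + Real.exp z) := by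
      calc (1:ℝ)/4 = Real.log (Real.exp (1/4:ℝ)) := (Real.log_exp _).symm
      _ ≤ Real.log (1 + Real.exp z) := by
        apply Real.log_le_log (Real.exp_pos _)
        linarith
    have := le_max_right (-z) 0
    linarith
  · have : (1:ℝ) ≤ -z := by linarith
    have hm : (1:ℝ) ≤ max (-z) 0 := le_trans this (le_max_left _ _)
    linarith [gfun_nonneg z]

private lemma gfun_le_one (z : ℝ) (hz : z ≤ 1/2) : Real.log (1 + Real.exp z) ≤ 1 := by
  have hs : Real.exp (1/2:ℝ) * Real.exp (1/2:ℝ) = Real.exp 1 := by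
    rw [← Real.exp_add]; norm_num
  have h1 : Real.exp 1 > 2.7182818283 := Real.exp_one_gt_d9
  have hle : Real.exp z ≤ Real.exp (1/2:ℝ) := Real.exp_le_exp.mpr hz
  have h2 : 1 + Real.exp (1/2:ℝ) ≤ Real.exp 1 := by
    nlinarith [Real.exp_pos (1/2:ℝ), sq_nonneg (Real.exp (1/2:ℝ) - 8/5)]
  calc Real.log (1 + Real.exp z) ≤ Real.log (Real.exp 1) := by
        apply Real.log_le_log (by nlinarith [Real.exp_pos z])
        linarith
  _ = 1 := Real.log_exp 1

private lemma mul_max_zero (c a : ℝ) (hc : 0 ≤ c) : c * max a 0 = max (c * a) 0 := by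
  rcases le_total a 0 with h | h
  · rw [max_eq_right h, max_eq_right (mul_nonpos_of_nonneg_of_nonpos hc h), mul_zero]
  · rw [max_eq_left h, max_eq_left (mul_nonneg hc h)]

theorem sensitivity_bound_small_part {n d : ℕ}
    (X : Matrix (Fin n) (Fin d) ℝ) (w : Fin n → ℝ) (hw : ∀ i, 0 < w i)
    (μ : ℝ) (hμ : 0 ≤ μ)
    (hcomplex : ∀ β : Fin d → ℝ, β ≠ 0 →
      (∑ j, max ((Matrix.diagonal w * X).mulVec β j) 0) ≤
        μ * (∑ j, max (-((Matrix.diagonal w * X).mulVec β j)) 0))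
    (g : ℝ → ℝ) (hg : ∀ z, g z = Real.log (1 + Real.exp z))
    (i : Fin n) (β : Fin d → ℝ) (hβ : X.mulVec β i ≤ (1/2 : ℝ)) :
    w i * g (X.mulVec β i) ≤
      ((20 + μ) * w i / (∑ j, w j)) * (∑ j, w j * g (X.mulVec β j)) := by
  set z := X.mulVec β with hzdef
  set T := ∑ j, w j * g (z j) with hTdef
  have hT0 : 0 ≤ T := Finset.sum_nonneg fun j _ =>
    mul_nonneg (hw j).le (by rw [hg]; exact gfun_nonneg _)
  have hW : 0 < ∑ j, w j :=
    Finset.sum_pos (fun j _ => hw j) ⟨i, Finset.mem_univ i⟩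
  have hdiag : ∀ (v : Fin d → ℝ) (j : Fin n),
      (Matrix.diagonal w * X).mulVec v j = w j * X.mulVec v j := by
    intro v j
    rw [← Matrix.mulVec_mulVec, Matrix.mulVec_diagonal]
  -- bound on sum of positive parts by T
  have hpos_le : (∑ j, w j * max (z j) 0) ≤ T := by
    apply Finset.sum_le_sum
    intro j _
    apply mul_le_mul_of_nonneg_left _ (hw j).le
    rw [hg]
    exact max_le (gfun_ge _) (gfun_nonneg _)
  -- bound on sum of negative parts
  have hneg : (∑ j, w j * max (-(z j)) 0) ≤ μ * T := by
    by_cases hb : β = 0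
    · have : ∀ j, z j = 0 := by
        intro j; rw [hzdef, hb, Matrix.mulVec_zero]; rfl
      simp only [this, neg_zero, max_self, mul_zero, Finset.sum_const_zero]
      exact mul_nonneg hμ hT0
    · have h := hcomplex (-β) (neg_ne_zero.mpr hb)
      have hmv : ∀ j, (Matrix.diagonal w * X).mulVec (-β) j = -(w j * z j) := by
        intro j
        rw [hdiag, hzdef, Matrix.mulVec_neg, Pi.neg_apply]
        ring
      simp only [hmv, neg_neg] at h
      calc (∑ j, w j * max (-(z j)) 0) = ∑ j, max (-(w j * z j)) 0 := by
            apply Finset.sum_congr rfl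
            intro j _
            rw [mul_max_zero _ _ (hw j).le, mul_neg]
      _ ≤ μ * ∑ j, max (w j * z j) 0 := h
      _ ≤ μ * T := by
            apply mul_le_mul_of_nonneg_left _ hμ
            calc (∑ j, max (w j * z j) 0) = ∑ j, w j * max (z j) 0 := by
                  apply Finset.sum_congr rfl
                  intro j _
                  rw [mul_max_zero _ _ (hw j).le]
            _ ≤ T := hpos_le
  -- main bound : W ≤ (4+μ) T
  have hWT : (∑ j, w j) ≤ (4 + μ) * T := by
    have h1 : (∑ j, w j) ≤ ∑ j, w j * (4 * g (z j) + max (-(z j)) 0) := by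
      apply Finset.sum_le_sum
      intro j _
      have hk : 1 ≤ 4 * g (z j) + max (-(z j)) 0 := by
        rw [hg]; exact gfun_key _
      nlinarith [hw j]
    have expand : (∑ j, w j * (4 * g (z j) + max (-(z j)) 0))
        = 4 * T + ∑ j, w j * max (-(z j)) 0 := by
      rw [hTdef, Finset.mul_sum, ← Finset.sum_add_distrib]
      apply Finset.sum_congr rfl
      intro j _; ring
    rw [expand] at h1
    linarith
  have hgi1 : g (z i) ≤ 1 := by rw [hg]; exact gfun_le_one _ hβ
  have hgi0 : 0 ≤ g (z i) := by rw [hg]; exact gfun_nonneg _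
  rw [div_mul_eq_mul_div, le_div_iff₀ hW]
  nlinarith [mul_nonneg (mul_nonneg (hw i).le hW.le) (sub_nonneg.mpr hgi1),
    mul_nonneg (hw i).le hT0,
    mul_le_mul_of_nonneg_left hWT (hw i).le]
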